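/- arXiv:1609.07558 — 3 statements merged into one kernel-verified Lean document; each statement's English description precedes it below -/
import Mathlib

section
/- Let A be positive with E[A^k] < ∞ and (1−p)E[A^k] < 1, Q Bernoulli(p), and X ≥ 0 satisfy X = AQ + A(1−Q)(1+X) in distribution with X, A, Q independent. Then E[X^k] = (E[A^k]/(1 − (1−p)E[A^k])) · [ (1−p) Σ_{j=0}^{k-1} C(k,j) E[X^j] + p ]. -/
/-!
Write `R = AQ + A(1-Q)(1+X)`. Since `Q` is not assumed measurable, it is only seen through `R`:
on `{X ≠ 0}` it equals `(A + AX - R)/(AX)`, hence is a.e.-measurable there. Independence says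
that restricting to `{Q = e}` scales the law of `(A, X)` on `{X ≠ 0}` by `P(Q = e)`; as
`p + (1 - p) = 1`, `Q ∈ {0, 1}` a.e. on `{X ≠ 0}`, and the law of `R` is the mixture
`p · law(A) + (1 - p) · law(A(1 + X))` (on `{X = 0}` both branches equal `A`). Taking `k`-th
moments and using the independence of `A` and `X` together with the binomial expansion of
`(1 + X)^k` gives `E[X^k] = p E[A^k] + (1 - p) E[A^k] (E[X^k] + ∑_{j<k} C(k,j) E[X^j])`,
which is solved for `E[X^k]`.
-/

open MeasureTheory ProbabilityTheory

open scoped ENNReal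

section

variable {Ω α β γ : Type*} [MeasurableSpace Ω] [MeasurableSpace α] [MeasurableSpace β]
  [MeasurableSpace γ] {μ : Measure Ω}

theorem map_prodMk_restrict_eq_smul [IsFiniteMeasure μ] {f : Ω → α} {g : Ω → β}
    (hf : Measurable f) (hg : Measurable g) {s : Set Ω} {r : ℝ≥0∞}
    (h : ∀ B C, MeasurableSet B → MeasurableSet C →
      μ (f ⁻¹' B ∩ g ⁻¹' C ∩ s) = r * μ (f ⁻¹' B ∩ g ⁻¹' C)) :
    (μ.restrict s).map (fun ω => (f ω, g ω)) = r • μ.map (fun ω => (f ω, g ω)) := by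
  have hfg : Measurable fun ω => (f ω, g ω) := hf.prodMk hg
  have hrect : ∀ B C, MeasurableSet B → MeasurableSet C →
      (μ.restrict s).map (fun ω => (f ω, g ω)) (B ×ˢ C)
        = (r • μ.map (fun ω => (f ω, g ω))) (B ×ˢ C) := by
    intro B C hB hC
    rw [Measure.map_apply hfg (hB.prod hC), Measure.smul_apply, Measure.map_apply hfg (hB.prod hC),
      Measure.restrict_apply (hfg (hB.prod hC)), Set.mk_preimage_prod, smul_eq_mul]
    exact h B C hB hC
  refine ext_of_generate_finite _ generateFrom_prod.symm isPiSystem_prod ?_ ?_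
  · rintro _ ⟨B, hB, C, hC, rfl⟩
    exact hrect B C hB hC
  · simpa using hrect Set.univ Set.univ .univ .univ

theorem restrict_preimage_add_restrict_preimage [IsFiniteMeasure μ] [MeasurableSingletonClass α]
    {Y : Ω → α} (hY : AEMeasurable Y μ) {a b : α} (hab : a ≠ b)
    (h : μ (Y ⁻¹' {a}) + μ (Y ⁻¹' {b}) = μ Set.univ) :
    μ.restrict (Y ⁻¹' {a}) + μ.restrict (Y ⁻¹' {b}) = μ := by
  have ha := hY.nullMeasurableSet_preimage (measurableSet_singleton a)
  have hb := hY.nullMeasurableSet_preimage (measurableSet_singleton b)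
  have hdisj : AEDisjoint μ (Y ⁻¹' {a}) (Y ⁻¹' {b}) :=
    ((Set.disjoint_singleton.2 hab).preimage Y).aedisjoint
  have hab_ae : ∀ᵐ ω ∂μ, ω ∈ Y ⁻¹' {a} ∪ Y ⁻¹' {b} :=
    (ae_iff_measure_eq (ha.union hb)).2 ((measure_union₀ hb hdisj).trans h)
  rw [← Measure.restrict_union₀ hdisj hb, Measure.restrict_eq_self_of_ae_mem hab_ae]

theorem measure_inter_preimage_eq_of_iIndepFun {A Q X : Ω → α} (h : iIndepFun ![A, Q, X] μ)
    {B C E : Set α} (hB : MeasurableSet B) (hC : MeasurableSet C) (hE : MeasurableSet E) :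
    μ (A ⁻¹' B ∩ X ⁻¹' C ∩ Q ⁻¹' E) = μ (Q ⁻¹' E) * μ (A ⁻¹' B ∩ X ⁻¹' C) := by
  have h3 := h.measure_inter_preimage_eq_mul Finset.univ (sets := ![B, E, C])
    (fun i _ => by fin_cases i <;> assumption)
  have hAX : IndepFun A X μ := h.indepFun (show (0 : Fin 3) ≠ 2 by decide)
  have hset : ⋂ i ∈ Finset.univ, ![A, Q, X] i ⁻¹' ![B, E, C] i
      = A ⁻¹' B ∩ X ⁻¹' C ∩ Q ⁻¹' E := by
    ext ω
    simp only [Finset.mem_univ, Set.iInter_true, Set.mem_iInter, Fin.forall_fin_succ]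
    simp [and_comm, and_assoc]
  rw [hset, Fin.prod_univ_three] at h3
  simp only [Matrix.cons_val] at h3
  rw [h3, hAX.measure_inter_preimage_eq_mul B C hB hC]
  ring

theorem map_restrict_restrict_preimage_eq_smul [IsFiniteMeasure μ] {A Q X : Ω → α}
    (hA : Measurable A) (hX : Measurable X) (h : iIndepFun ![A, Q, X] μ) {S E : Set α}
    (hS : MeasurableSet S) (hE : MeasurableSet E) {φ : α × α → γ} (hφ : Measurable φ) :
    ((μ.restrict (X ⁻¹' S)).restrict (Q ⁻¹' E)).map (fun ω => φ (A ω, X ω))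
      = μ (Q ⁻¹' E) • (μ.restrict (X ⁻¹' S)).map (fun ω => φ (A ω, X ω)) := by
  have hAX : Measurable fun ω => (A ω, X ω) := hA.prodMk hX
  have hpair : ((μ.restrict (X ⁻¹' S)).restrict (Q ⁻¹' E)).map (fun ω => (A ω, X ω))
      = μ (Q ⁻¹' E) • (μ.restrict (X ⁻¹' S)).map (fun ω => (A ω, X ω)) := by
    refine map_prodMk_restrict_eq_smul hA hX fun B C hB hC => ?_
    have hl : A ⁻¹' B ∩ X ⁻¹' C ∩ Q ⁻¹' E ∩ X ⁻¹' S = A ⁻¹' B ∩ X ⁻¹' (C ∩ S) ∩ Q ⁻¹' E := by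
      ext ω
      simp only [Set.mem_inter_iff, Set.mem_preimage]
      tauto
    rw [Measure.restrict_apply' (hX hS), Measure.restrict_apply' (hX hS), hl,
      Set.inter_assoc (A ⁻¹' B) (X ⁻¹' C), ← Set.preimage_inter (f := X)]
    exact measure_inter_preimage_eq_of_iIndepFun h hB (hC.inter hS) hE
  rw [← Function.comp_def φ, ← Measure.map_map hφ hAX, hpair, Measure.map_smul,
    Measure.map_map hφ hAX]

theorem integral_comp_eq_of_map_eq_smul_add_smul {Y Z W : Ω → α} (hY : AEMeasurable Y μ)
    (hZ : AEMeasurable Z μ) (hW : AEMeasurable W μ) {c d : ℝ≥0∞} (hc : c ≠ ∞) (hd : d ≠ ∞)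
    (h : μ.map Y = c • μ.map Z + d • μ.map W) {g : α → ℝ} (hg : Measurable g)
    (hgZ : Integrable (fun ω => g (Z ω)) μ) (hgW : Integrable (fun ω => g (W ω)) μ) :
    ∫ ω, g (Y ω) ∂μ = c.toReal * ∫ ω, g (Z ω) ∂μ + d.toReal * ∫ ω, g (W ω) ∂μ := by
  have hZ' : Integrable g (μ.map Z) := (integrable_map_measure hg.aestronglyMeasurable hZ).2 hgZ
  have hW' : Integrable g (μ.map W) := (integrable_map_measure hg.aestronglyMeasurable hW).2 hgW
  rw [← integral_map hY hg.aestronglyMeasurable, h,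
    integral_add_measure (hZ'.smul_measure hc) (hW'.smul_measure hd), integral_smul_measure,
    integral_smul_measure, integral_map hZ hg.aestronglyMeasurable,
    integral_map hW hg.aestronglyMeasurable, smul_eq_mul, smul_eq_mul]

theorem integrable_one_add_pow {X : Ω → ℝ} {k : ℕ}
    (h : ∀ j ≤ k, Integrable (fun ω => X ω ^ j) μ) :
    Integrable (fun ω => (1 + X ω) ^ k) μ := by
  simp_rw [add_comm 1 (X _), add_pow, one_pow, mul_one]
  exact integrable_finsetSum _ fun j hj => (h j (Finset.mem_range_succ_iff.1 hj)).mul_const _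

theorem integral_one_add_pow {X : Ω → ℝ} {k : ℕ}
    (h : ∀ j ≤ k, Integrable (fun ω => X ω ^ j) μ) :
    ∫ ω, (1 + X ω) ^ k ∂μ = ∑ j ∈ Finset.range (k + 1), (k.choose j : ℝ) * ∫ ω, X ω ^ j ∂μ := by
  simp_rw [add_comm 1 (X _), add_pow, one_pow, mul_one]
  rw [integral_finsetSum _ fun j hj => (h j (Finset.mem_range_succ_iff.1 hj)).mul_const _]
  simp_rw [integral_mul_const, mul_comm]

end

section

variable {Ω : Type*} [MeasurableSpace Ω] {μ : Measure Ω} {A Q X : Ω → ℝ}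

theorem aemeasurable_restrict_of_aemeasurable_mul_add (hA : Measurable A) (hX : Measurable X)
    (hA0 : ∀ᵐ ω ∂μ, A ω ≠ 0)
    (hR : AEMeasurable (fun ω => A ω * Q ω + A ω * (1 - Q ω) * (1 + X ω)) μ) :
    AEMeasurable Q (μ.restrict (X ⁻¹' {0}ᶜ)) := by
  have hT : MeasurableSet (X ⁻¹' {0}ᶜ) := hX (measurableSet_singleton 0).compl
  refine ((((hA.add (hA.mul hX)).aemeasurable.sub hR).div
    (hA.mul hX).aemeasurable).restrict).congr ?_
  filter_upwards [ae_restrict_mem hT, ae_restrict_of_ae hA0] with ω (hXω : X ω ≠ 0) hAω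
  simp only [Pi.div_apply, Pi.sub_apply, Pi.add_apply, Pi.mul_apply]
  field_simp
  ring

theorem map_restrict_ne_zero_eq_bernoulli_mixture [IsFiniteMeasure μ] (hA : Measurable A)
    (hX : Measurable X) (hA0 : ∀ᵐ ω ∂μ, A ω ≠ 0) {p : ℝ} (hp0 : 0 ≤ p) (hp1 : p ≤ 1)
    (hQ1 : μ (Q ⁻¹' {1}) = ENNReal.ofReal p) (hQ0 : μ (Q ⁻¹' {0}) = ENNReal.ofReal (1 - p))
    (hind : iIndepFun ![A, Q, X] μ)
    (hR : AEMeasurable (fun ω => A ω * Q ω + A ω * (1 - Q ω) * (1 + X ω)) μ) :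
    (μ.restrict (X ⁻¹' {0}ᶜ)).map (fun ω => A ω * Q ω + A ω * (1 - Q ω) * (1 + X ω))
      = ENNReal.ofReal p • (μ.restrict (X ⁻¹' {0}ᶜ)).map A
        + ENNReal.ofReal (1 - p) • (μ.restrict (X ⁻¹' {0}ᶜ)).map (fun ω => A ω * (1 + X ω)) := by
  set ν := μ.restrict (X ⁻¹' {0}ᶜ)
  have hQ : AEMeasurable Q ν := aemeasurable_restrict_of_aemeasurable_mul_add hA hX hA0 hR
  have hQe : ∀ e, NullMeasurableSet (Q ⁻¹' {e}) ν :=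
    fun e => hQ.nullMeasurableSet_preimage (measurableSet_singleton e)
  have hcond : ∀ e (φ : ℝ × ℝ → ℝ), Measurable φ →
      (ν.restrict (Q ⁻¹' {e})).map (fun ω => φ (A ω, X ω))
        = μ (Q ⁻¹' {e}) • ν.map (fun ω => φ (A ω, X ω)) := fun e _ hφ =>
    map_restrict_restrict_preimage_eq_smul hA hX hind (measurableSet_singleton 0).compl
      (measurableSet_singleton e) hφ
  have hsplit : ν.restrict (Q ⁻¹' {1}) + ν.restrict (Q ⁻¹' {0}) = ν := by
    refine restrict_preimage_add_restrict_preimage hQ one_ne_zero ?_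
    have hmass : ∀ e, ν (Q ⁻¹' {e}) = μ (Q ⁻¹' {e}) * ν Set.univ := fun e => by
      simpa [Measure.map_apply hA .univ] using congrArg (· Set.univ) (hcond e _ measurable_fst)
    rw [hmass, hmass, ← add_mul, hQ1, hQ0, ← ENNReal.ofReal_add hp0 (by linarith),
      add_sub_cancel, ENNReal.ofReal_one, one_mul]
  have hR1 : (ν.restrict (Q ⁻¹' {1})).map (fun ω => A ω * Q ω + A ω * (1 - Q ω) * (1 + X ω))
      = ENNReal.ofReal p • ν.map A := by
    rw [Measure.map_congr (g := fun ω => (A ω, X ω).1), hcond 1 _ measurable_fst, hQ1]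
    filter_upwards [ae_restrict_mem₀ (hQe 1)] with ω (hω : Q ω = 1)
    simp [hω]
  have hR0 : (ν.restrict (Q ⁻¹' {0})).map (fun ω => A ω * Q ω + A ω * (1 - Q ω) * (1 + X ω))
      = ENNReal.ofReal (1 - p) • ν.map (fun ω => A ω * (1 + X ω)) := by
    rw [Measure.map_congr (g := fun ω => (A ω, X ω).1 * (1 + (A ω, X ω).2)),
      hcond 0 (fun x => x.1 * (1 + x.2)) (by fun_prop), hQ0]
    filter_upwards [ae_restrict_mem₀ (hQe 0)] with ω (hω : Q ω = 0)
    simp [hω]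
  have hRν : AEMeasurable (fun ω => A ω * Q ω + A ω * (1 - Q ω) * (1 + X ω)) ν := hR.restrict
  conv_lhs => rw [← hsplit]
  rw [hRν.restrict.map_add₀ hRν.restrict, hR1, hR0]

theorem map_eq_bernoulli_mixture_of_measurable [IsFiniteMeasure μ] (hA : Measurable A)
    (hX : Measurable X) (hA0 : ∀ᵐ ω ∂μ, A ω ≠ 0) {p : ℝ} (hp0 : 0 ≤ p) (hp1 : p ≤ 1)
    (hQ1 : μ (Q ⁻¹' {1}) = ENNReal.ofReal p) (hQ0 : μ (Q ⁻¹' {0}) = ENNReal.ofReal (1 - p))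
    (hind : iIndepFun ![A, Q, X] μ)
    (hR : AEMeasurable (fun ω => A ω * Q ω + A ω * (1 - Q ω) * (1 + X ω)) μ) :
    μ.map (fun ω => A ω * Q ω + A ω * (1 - Q ω) * (1 + X ω))
      = ENNReal.ofReal p • μ.map A + ENNReal.ofReal (1 - p) • μ.map (fun ω => A ω * (1 + X ω)) := by
  set T := X ⁻¹' {0}ᶜ
  have hT : MeasurableSet T := hX (measurableSet_singleton 0).compl
  have hμ : μ = μ.restrict T + μ.restrict Tᶜ := (Measure.restrict_add_restrict_compl hT).symm
  have hX0 : ∀ᵐ ω ∂μ.restrict Tᶜ, X ω = 0 := by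
    filter_upwards [ae_restrict_mem hT.compl] with ω hω
    simpa [T] using hω
  have hRc : (μ.restrict Tᶜ).map (fun ω => A ω * Q ω + A ω * (1 - Q ω) * (1 + X ω))
      = (μ.restrict Tᶜ).map A :=
    Measure.map_congr (hX0.mono fun ω hω => by simp only [hω]; ring)
  have hBc : (μ.restrict Tᶜ).map (fun ω => A ω * (1 + X ω)) = (μ.restrict Tᶜ).map A :=
    Measure.map_congr (hX0.mono fun ω hω => by simp [hω])
  have hpq : ENNReal.ofReal p + ENNReal.ofReal (1 - p) = 1 := by
    rw [← ENNReal.ofReal_add hp0 (by linarith), add_sub_cancel, ENNReal.ofReal_one]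
  conv_lhs => rw [hμ]
  conv_rhs => rw [hμ]
  rw [hR.restrict.map_add₀ hR.restrict,
    map_restrict_ne_zero_eq_bernoulli_mixture hA hX hA0 hp0 hp1 hQ1 hQ0 hind hR, hRc,
    Measure.map_add _ _ hA, Measure.map_add (f := fun ω => A ω * (1 + X ω)) _ _ (by fun_prop),
    hBc, smul_add, smul_add]
  nth_rewrite 1 [← one_smul ℝ≥0∞ ((μ.restrict Tᶜ).map A), ← hpq, add_smul]
  abel

theorem map_eq_bernoulli_mixture [IsFiniteMeasure μ] (hA : AEMeasurable A μ)
    (hX : AEMeasurable X μ) (hA0 : ∀ᵐ ω ∂μ, A ω ≠ 0) {p : ℝ} (hp0 : 0 ≤ p) (hp1 : p ≤ 1)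
    (hQ1 : μ (Q ⁻¹' {1}) = ENNReal.ofReal p) (hQ0 : μ (Q ⁻¹' {0}) = ENNReal.ofReal (1 - p))
    (hind : iIndepFun ![A, Q, X] μ)
    (hR : AEMeasurable (fun ω => A ω * Q ω + A ω * (1 - Q ω) * (1 + X ω)) μ) :
    μ.map (fun ω => A ω * Q ω + A ω * (1 - Q ω) * (1 + X ω))
      = ENNReal.ofReal p • μ.map A + ENNReal.ofReal (1 - p) • μ.map (fun ω => A ω * (1 + X ω)) := by
  have hA' := hA.ae_eq_mk
  have hX' := hX.ae_eq_mk
  have hR' : (fun ω => A ω * Q ω + A ω * (1 - Q ω) * (1 + X ω))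
      =ᵐ[μ] fun ω => hA.mk A ω * Q ω + hA.mk A ω * (1 - Q ω) * (1 + hX.mk X ω) := by
    filter_upwards [hA', hX'] with ω h₁ h₂
    rw [h₁, h₂]
  have hB' : (fun ω => A ω * (1 + X ω)) =ᵐ[μ] fun ω => hA.mk A ω * (1 + hX.mk X ω) := by
    filter_upwards [hA', hX'] with ω h₁ h₂
    rw [h₁, h₂]
  have hind' : iIndepFun ![hA.mk A, Q, hX.mk X] μ := by
    refine hind.congr fun i => ?_
    fin_cases i
    exacts [hA', .rfl, hX']
  rw [Measure.map_congr hR', Measure.map_congr hA', Measure.map_congr hB']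
  exact map_eq_bernoulli_mixture_of_measurable hA.measurable_mk hX.measurable_mk
    (hA0.congr (hA'.mono fun ω h => by rw [h])) hp0 hp1 hQ1 hQ0 hind' (hR.congr hR')

end

theorem stmt17_general {Ω : Type*} [MeasureSpace Ω] [IsProbabilityMeasure (ℙ : Measure Ω)]
    (A Q X : Ω → ℝ) (p : ℝ) (hp : p ∈ Set.Ioo (0 : ℝ) 1) (k : ℕ) (hk : 1 ≤ k)
    (hApos : ∀ ω, 0 < A ω)
    (hQ1 : ℙ {ω | Q ω = 1} = ENNReal.ofReal p)
    (hQ0 : ℙ {ω | Q ω = 0} = ENNReal.ofReal (1 - p))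
    (hindep : iIndepFun (m := fun _ => (inferInstance : MeasurableSpace ℝ)) ![A, Q, X] ℙ)
    (hfix : Measure.map X ℙ
      = Measure.map (fun ω => A ω * Q ω + A ω * (1 - Q ω) * (1 + X ω)) ℙ)
    (hAint : ∀ i ≤ k, Integrable (fun ω => A ω ^ i) ℙ)
    (hXint : ∀ j ≤ k, Integrable (fun ω => X ω ^ j) ℙ)
    (hAlt : ∀ i, 1 ≤ i → i ≤ k → (1 - p) * 𝔼[fun ω => A ω ^ i] < 1) :
    𝔼[fun ω => X ω ^ k]
      = 𝔼[fun ω => A ω ^ k] / (1 - (1 - p) * 𝔼[fun ω => A ω ^ k])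
        * ((1 - p) * ∑ j ∈ Finset.range k, (k.choose j : ℝ) * 𝔼[fun ω => X ω ^ j]
            + p) := by
  obtain ⟨hp0, hp1⟩ := hp
  have hA : AEMeasurable A ℙ := by simpa using (hAint 1 hk).aemeasurable
  have hX : AEMeasurable X ℙ := by simpa using (hXint 1 hk).aemeasurable
  have hR : AEMeasurable (fun ω => A ω * Q ω + A ω * (1 - Q ω) * (1 + X ω)) ℙ :=
    .of_map_ne_zero (hfix ▸ (Measure.isProbabilityMeasure_map hX).ne_zero)
  have hmix := hfix.trans (map_eq_bernoulli_mixture hA hX (.of_forall fun ω => (hApos ω).ne')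
    hp0.le hp1.le hQ1 hQ0 hindep hR)
  have hind : IndepFun (fun ω => A ω ^ k) (fun ω => (1 + X ω) ^ k) ℙ :=
    (hindep.indepFun (show (0 : Fin 3) ≠ 2 by decide)).comp (measurable_id.pow_const k)
      ((measurable_const.add measurable_id).pow_const k)
  have hAk := hAint k le_rfl
  have h1Xk := integrable_one_add_pow hXint
  have hmoment : ∫ ω, X ω ^ k = p * (∫ ω, A ω ^ k)
      + (1 - p) * ((∫ ω, A ω ^ k) * ∫ ω, (1 + X ω) ^ k) := by
    rw [integral_comp_eq_of_map_eq_smul_add_smul (g := fun x => x ^ k) hX hA (by fun_prop)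
      ENNReal.ofReal_ne_top ENNReal.ofReal_ne_top hmix (by fun_prop) hAk
      (by simp_rw [mul_pow]; exact hind.integrable_mul hAk h1Xk),
      ENNReal.toReal_ofReal hp0.le, ENNReal.toReal_ofReal (by linarith)]
    simp_rw [mul_pow]
    rw [hind.integral_fun_mul_eq_mul_integral hAk.1 h1Xk.1]
  rw [integral_one_add_pow hXint, Finset.sum_range_succ, Nat.choose_self] at hmoment
  have hne : 1 - (1 - p) * ∫ ω, A ω ^ k ≠ 0 := (sub_pos.2 (hAlt k hk le_rfl)).ne'
  rw [div_mul_eq_mul_div, eq_div_iff hne]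
  push_cast at hmoment
  linear_combination hmoment

/-- Positive moments of the solution of `X = AQ + A(1-Q)(1+X)` in distribution, with
`Q` Bernoulli(p) and `X, A, Q` mutually independent:
`E[X^k] = (E[A^k]/(1-(1-p)E[A^k])) ((1-p) ∑_{j<k} C(k,j) E[X^j] + p)`. -/
theorem stmt17 {Ω : Type*} [MeasureSpace Ω] [IsProbabilityMeasure (ℙ : Measure Ω)]
    (A Q X : Ω → ℝ) (p : ℝ) (hp : p ∈ Set.Ioo (0 : ℝ) 1) (k : ℕ) (hk : 1 ≤ k)
    (hApos : ∀ ω, 0 < A ω) (hXpos : ∀ ω, 0 ≤ X ω)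
    (hQ1 : ℙ {ω | Q ω = 1} = ENNReal.ofReal p)
    (hQ0 : ℙ {ω | Q ω = 0} = ENNReal.ofReal (1 - p))
    (hindep : iIndepFun (m := fun _ => (inferInstance : MeasurableSpace ℝ)) ![A, Q, X] ℙ)
    (hfix : Measure.map X ℙ
      = Measure.map (fun ω => A ω * Q ω + A ω * (1 - Q ω) * (1 + X ω)) ℙ)
    (hAint : ∀ i ≤ k, Integrable (fun ω => A ω ^ i) ℙ)
    (hXint : ∀ j ≤ k, Integrable (fun ω => X ω ^ j) ℙ)
    (hAlt : ∀ i, 1 ≤ i → i ≤ k → (1 - p) * 𝔼[fun ω => A ω ^ i] < 1) :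
    𝔼[fun ω => X ω ^ k]
      = 𝔼[fun ω => A ω ^ k] / (1 - (1 - p) * 𝔼[fun ω => A ω ^ k])
        * ((1 - p) * ∑ j ∈ Finset.range k, (k.choose j : ℝ) * 𝔼[fun ω => X ω ^ j]
            + p) :=
  stmt17_general A Q X p hp k hk hApos hQ1 hQ0 hindep hfix hAint hXint hAlt
end

section
/- For X_n = Σ_{i=1}^{n} exp(σ W_{t_i} + (m − σ²/2) t_i) with t_i = iτ, fixed n ∈ ℕ: lim_{x→∞} log P(X_n ≥ x) / (log x)² = −1/(2σ²τn). -/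
/-!
The event `X_n ≥ x` contains the event that its last term `exp (σ W_T + (m - σ²/2) T)`,
`T = nτ`, is at least `x`, and is contained in the union over `i` of the events that the `i`-th
term is at least `x / n`. Each of these is a Gaussian tail event `W_t ≥ (log x + O(1)) / σ`
with `t ≤ T`, whose probability is `exp (-(log x)² / (2σ²T) + O(log x))` by elementary bounds
on the tail integral of the Gaussian density, with `t = T` for the lower bound.
-/

open MeasureTheory ProbabilityTheory Real

/-- A standard Brownian motion on a probability space: starts at `0`, has
continuous paths, Gaussian increments `W_t - W_s ~ N(0, t-s)`, and independent
increments over disjoint ordered time intervals. -/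
def IsStdBrownianMotion {Ω : Type*} [MeasureSpace Ω] (W : ℝ → Ω → ℝ) : Prop :=
  (∀ ω, W 0 ω = 0) ∧
  (∀ ω, Continuous fun t => W t ω) ∧
  (∀ t, Measurable (W t)) ∧
  (∀ s t : ℝ, 0 ≤ s → s ≤ t →
    Measure.map (fun ω => W t ω - W s ω) ℙ
      = gaussianReal 0 (Real.toNNReal (t - s))) ∧
  (∀ n : ℕ, ∀ t : ℕ → ℝ, Monotone t → 0 ≤ t 0 →
    iIndepFun
      (fun i : Fin n => fun ω => W (t (i + 1)) ω - W (t i) ω) ℙ)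

open Set Filter Topology
open scoped NNReal

lemma gaussianReal_Ici_toReal {v : ℝ≥0} (hv : v ≠ 0) (a : ℝ) :
    (gaussianReal 0 v (Ici a)).toReal = ∫ x in Ici a, gaussianPDFReal 0 v x := by
  rw [gaussianReal_apply_eq_integral 0 hv, ENNReal.toReal_ofReal]
  exact setIntegral_nonneg measurableSet_Ici fun x _ ↦ gaussianPDFReal_nonneg 0 v x

lemma gaussianReal_Ici_toReal_le {v : ℝ≥0} (hv : v ≠ 0) {a : ℝ} (ha : 1 ≤ a) :
    (gaussianReal 0 v (Ici a)).toReal ≤ √v * exp (-a ^ 2 / (2 * v)) := by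
  have hv0 : (0 : ℝ) < v := NNReal.coe_pos.2 (pos_iff_ne_zero.2 hv)
  have ha0 : 0 < a := one_pos.trans_le ha
  rw [gaussianReal_Ici_toReal hv, integral_Ici_eq_integral_Ioi]
  -- `-x²/2v ≤ a²/2v - (a/v) x` is `(x - a)² ≥ 0`: compare the density with an exponential.
  calc ∫ x in Ioi a, gaussianPDFReal 0 v x
      ≤ ∫ x in Ioi a, (√(2 * π * v))⁻¹ * (exp (a ^ 2 / (2 * v)) * exp (-(a / v) * x)) := by
        refine setIntegral_mono_on (integrable_gaussianPDFReal 0 v).integrableOn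
          ((integrableOn_exp_mul_Ioi (by simp [ha0, hv0]) a).const_mul _ |>.const_mul _)
          measurableSet_Ioi fun x _ ↦ ?_
        rw [gaussianPDFReal, ← exp_add]
        gcongr
        field_simp
        nlinarith [sq_nonneg (x - a)]
    _ = (√(2 * π * v))⁻¹ * (v / a) * exp (-a ^ 2 / (2 * v)) := by
        rw [integral_const_mul, integral_const_mul, integral_exp_mul_Ioi (by simp [ha0, hv0])]
        field_simp
        rw [← exp_add]
        ring_nf
    _ ≤ (√v)⁻¹ * v * exp (-a ^ 2 / (2 * v)) := by
        gcongr
        · nlinarith [pi_gt_three]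
        · exact div_le_self hv0.le ha
    _ = √v * exp (-a ^ 2 / (2 * v)) := by
        rw [inv_mul_eq_div, div_sqrt]

lemma gaussianReal_Ici_toReal_ge {v : ℝ≥0} (hv : v ≠ 0) {a : ℝ} (ha : 0 ≤ a) :
    (√(2 * π * v))⁻¹ * exp (-(a + 1) ^ 2 / (2 * v)) ≤ (gaussianReal 0 v (Ici a)).toReal := by
  rw [gaussianReal_Ici_toReal hv]
  calc (√(2 * π * v))⁻¹ * exp (-(a + 1) ^ 2 / (2 * v))
      = ∫ _ in Icc a (a + 1), (√(2 * π * v))⁻¹ * exp (-(a + 1) ^ 2 / (2 * v)) := by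
        simp
    _ ≤ ∫ x in Icc a (a + 1), gaussianPDFReal 0 v x := by
        refine setIntegral_mono_on (integrableOn_const (by simp) enorm_ne_top)
          (integrable_gaussianPDFReal 0 v).integrableOn measurableSet_Icc fun x hx ↦ ?_
        rw [gaussianPDFReal, sub_zero]
        gcongr
        all_goals linarith [hx.1, hx.2]
    _ ≤ ∫ x in Ici a, gaussianPDFReal 0 v x :=
        setIntegral_mono_set (integrable_gaussianPDFReal 0 v).integrableOn
          (.of_forall fun x ↦ gaussianPDFReal_nonneg 0 v x) Icc_subset_Ici_self.eventuallyLE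

lemma gaussianReal_Ici_toReal_le_of_le {v T B a : ℝ} (hv : 0 < v) (hvT : v ≤ T) (hB : 1 ≤ B)
    (hBa : B ≤ a) :
    (gaussianReal 0 v.toNNReal (Ici a)).toReal ≤ √T * exp (-B ^ 2 / (2 * T)) := by
  have hv' : v.toNNReal ≠ 0 := by simpa using hv
  calc (gaussianReal 0 v.toNNReal (Ici a)).toReal
      ≤ (gaussianReal 0 v.toNNReal (Ici B)).toReal := measureReal_mono (Ici_subset_Ici.2 hBa)
    _ ≤ √v * exp (-B ^ 2 / (2 * v)) := by simpa [hv.le] using gaussianReal_Ici_toReal_le hv' hB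
    _ ≤ √T * exp (-B ^ 2 / (2 * T)) := by
        rw [neg_div, neg_div]
        gcongr

lemma tendsto_sub_sq_div_sq (k d σ T : ℝ) :
    Tendsto (fun L : ℝ ↦ (k - ((L - d) / σ) ^ 2 / (2 * T)) / L ^ 2) atTop
      (𝓝 (-1 / (2 * σ ^ 2 * T))) := by
  have hk : Tendsto (fun L : ℝ ↦ k / L ^ 2) atTop (𝓝 0) :=
    tendsto_const_nhds.div_atTop (tendsto_pow_atTop (α := ℝ) two_ne_zero)
  have hd : Tendsto (fun L : ℝ ↦ 1 - d / L) atTop (𝓝 1) := by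
    have hdL : Tendsto (fun L : ℝ ↦ d / L) atTop (𝓝 0) := tendsto_const_nhds.div_atTop tendsto_id
    simpa using tendsto_const_nhds.sub hdL
  have h := hk.sub ((hd.pow 2).div_const (2 * σ ^ 2 * T))
  rw [one_pow, zero_sub, ← neg_div] at h
  refine h.congr' ?_
  filter_upwards [eventually_ne_atTop 0] with L hL
  field_simp

lemma tendsto_log_div_log_sq_of_le_of_le {p : ℝ → ℝ} {A₁ A₂ d₁ d₂ σ T : ℝ} (hA₁ : 0 < A₁)
    (hlow : ∀ᶠ x in atTop, A₁ * exp (-((log x - d₁) / σ) ^ 2 / (2 * T)) ≤ p x)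
    (hup : ∀ᶠ x in atTop, p x ≤ A₂ * exp (-((log x - d₂) / σ) ^ 2 / (2 * T))) :
    Tendsto (fun x ↦ log (p x) / log x ^ 2) atTop (𝓝 (-1 / (2 * σ ^ 2 * T))) := by
  have hlog_bound {A d x : ℝ} (hA : 0 < A) :
      log (A * exp (-((log x - d) / σ) ^ 2 / (2 * T)))
        = log A - ((log x - d) / σ) ^ 2 / (2 * T) := by
    rw [log_mul hA.ne' (exp_ne_zero _), log_exp]
    ring
  refine tendsto_of_tendsto_of_tendsto_of_le_of_le'
    ((tendsto_sub_sq_div_sq (log A₁) d₁ σ T).comp tendsto_log_atTop)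
    ((tendsto_sub_sq_div_sq (log A₂) d₂ σ T).comp tendsto_log_atTop) ?_ ?_
  · filter_upwards [hlow] with x hx
    rw [Function.comp_apply, ← hlog_bound hA₁]
    gcongr
  · filter_upwards [hlow, hup] with x hxl hxu
    have hp : 0 < p x := lt_of_lt_of_le (by positivity) hxl
    have hA₂ : 0 < A₂ := pos_of_mul_pos_left (hp.trans_le hxu) (exp_pos _).le
    rw [Function.comp_apply, ← hlog_bound hA₂]
    gcongr

namespace IsStdBrownianMotion

variable {Ω : Type*} [MeasureSpace Ω] {W : ℝ → Ω → ℝ}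

lemma map_eq_gaussianReal (hW : IsStdBrownianMotion W) {t : ℝ} (ht : 0 ≤ t) :
    Measure.map (W t) ℙ = gaussianReal 0 t.toNNReal := by
  obtain ⟨hW0, -, -, hWi, -⟩ := hW
  simpa [hW0] using hWi 0 t le_rfl ht

lemma measure_le_exp_eq_gaussianReal (hW : IsStdBrownianMotion W) {σ : ℝ} (hσ : 0 < σ)
    (c : ℝ) {t y : ℝ} (ht : 0 ≤ t) (hy : 0 < y) :
    ℙ {ω | y ≤ exp (σ * W t ω + c * t)}
      = gaussianReal 0 t.toNNReal (Ici ((log y - c * t) / σ)) := by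
  rw [← hW.map_eq_gaussianReal ht, Measure.map_apply (hW.2.2.1 t) measurableSet_Ici]
  congr 1 with ω
  rw [mem_ofPred_eq, mem_preimage, mem_Ici, div_le_iff₀ hσ, ← log_le_iff_le_exp hy]
  constructor <;> intro h <;> linarith

variable [IsFiniteMeasure (ℙ : Measure Ω)] {ι : Type*} {s : Finset ι} {t : ι → ℝ} {σ c T x : ℝ}

lemma le_measure_le_sum_exp (hW : IsStdBrownianMotion W) {j : ι} (hj : j ∈ s) (hσ : 0 < σ)
    (hjT : t j = T) (hT : 0 < T) (hx : 0 < x) (hxT : c * T ≤ log x) :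
    (√(2 * π * T))⁻¹ * exp (-((log x - (c * T - σ)) / σ) ^ 2 / (2 * T))
      ≤ (ℙ {ω | x ≤ ∑ i ∈ s, exp (σ * W (t i) ω + c * t i)}).toReal := by
  have hvT : T.toNNReal ≠ 0 := by simpa using hT
  have ha : 0 ≤ (log x - c * T) / σ := div_nonneg (sub_nonneg.2 hxT) hσ.le
  have hshift : (log x - (c * T - σ)) / σ = (log x - c * T) / σ + 1 := by field_simp; ring
  calc (√(2 * π * T))⁻¹ * exp (-((log x - (c * T - σ)) / σ) ^ 2 / (2 * T))
      ≤ (gaussianReal 0 T.toNNReal (Ici ((log x - c * T) / σ))).toReal := by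
        simpa [hshift, hT.le] using gaussianReal_Ici_toReal_ge hvT ha
    _ = (ℙ {ω | x ≤ exp (σ * W T ω + c * T)}).toReal := by
        rw [hW.measure_le_exp_eq_gaussianReal hσ c hT.le hx]
    _ ≤ (ℙ {ω | x ≤ ∑ i ∈ s, exp (σ * W (t i) ω + c * t i)}).toReal := by
        refine measureReal_mono fun ω (hω : x ≤ _) ↦ hω.trans ?_
        rw [← hjT]
        exact Finset.single_le_sum (f := fun i ↦ exp (σ * W (t i) ω + c * t i))
          (fun i _ ↦ (exp_pos _).le) hj

lemma measure_le_sum_exp_le (hW : IsStdBrownianMotion W) (hs : s.Nonempty) (hσ : 0 < σ)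
    (ht : ∀ i ∈ s, 0 < t i ∧ t i ≤ T) (hx : 0 < x) (hxT : σ + log s.card + |c| * T ≤ log x) :
    (ℙ {ω | x ≤ ∑ i ∈ s, exp (σ * W (t i) ω + c * t i)}).toReal
      ≤ s.card * √T * exp (-((log x - (log s.card + |c| * T)) / σ) ^ 2 / (2 * T)) := by
  set B := (log x - (log s.card + |c| * T)) / σ
  have hB : 1 ≤ B := by rw [le_div_iff₀ hσ]; linarith
  have hcard : (0 : ℝ) < s.card := by exact_mod_cast hs.card_pos
  have hterm : ∀ i ∈ s, (ℙ {ω | x / s.card ≤ exp (σ * W (t i) ω + c * t i)}).toReal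
      ≤ √T * exp (-B ^ 2 / (2 * T)) := by
    intro i hi
    obtain ⟨hti, htiT⟩ := ht i hi
    have hct : c * t i ≤ |c| * T :=
      (mul_le_mul_of_nonneg_right (le_abs_self c) hti.le).trans (by gcongr)
    have hBa : B ≤ (log (x / s.card) - c * t i) / σ := by
      rw [log_div hx.ne' hcard.ne']
      exact div_le_div_of_nonneg_right (by linarith) hσ.le
    rw [hW.measure_le_exp_eq_gaussianReal hσ c hti.le (by positivity)]
    exact gaussianReal_Ici_toReal_le_of_le hti htiT hB hBa
  -- Some term of the sum is at least its average `x / #s`.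
  have hcover : {ω | x ≤ ∑ i ∈ s, exp (σ * W (t i) ω + c * t i)}
      ⊆ ⋃ i ∈ s, {ω | x / s.card ≤ exp (σ * W (t i) ω + c * t i)} := by
    intro ω (hω : x ≤ _)
    have hsum : ∑ _i ∈ s, x / s.card ≤ ∑ i ∈ s, exp (σ * W (t i) ω + c * t i) := by
      rwa [Finset.sum_const, nsmul_eq_mul, mul_div_cancel₀ x hcard.ne']
    obtain ⟨i, hi, h⟩ := Finset.exists_le_of_sum_le hs hsum
    exact mem_biUnion hi h
  calc (ℙ {ω | x ≤ ∑ i ∈ s, exp (σ * W (t i) ω + c * t i)}).toReal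
      ≤ ∑ i ∈ s, (ℙ {ω | x / s.card ≤ exp (σ * W (t i) ω + c * t i)}).toReal :=
        (measureReal_mono hcover (measure_ne_top _ _)).trans (measureReal_biUnion_finset_le _ _)
    _ ≤ ∑ _i ∈ s, √T * exp (-B ^ 2 / (2 * T)) := Finset.sum_le_sum hterm
    _ = s.card * √T * exp (-B ^ 2 / (2 * T)) := by rw [Finset.sum_const, nsmul_eq_mul, mul_assoc]

end IsStdBrownianMotion

/-- Right-tail asymptotics of the finite sum
`X_n = ∑_{i=1}^{n} exp(σ W_{t_i} + (m-σ²/2)t_i)`: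
`lim_{x→∞} log P(X_n ≥ x) / (log x)² = -1/(2σ²τn)`. -/
theorem stmt18 {Ω : Type*} [MeasureSpace Ω] [IsProbabilityMeasure (ℙ : Measure Ω)]
    (W : ℝ → Ω → ℝ) (hW : IsStdBrownianMotion W)
    (σ τ m : ℝ) (hσ : 0 < σ) (hτ : 0 < τ) (n : ℕ) (hn : 1 ≤ n) :
    Filter.Tendsto
      (fun x : ℝ =>
        Real.log (ℙ {ω | x ≤ ∑ i ∈ Finset.range n,
          Real.exp (σ * W (((i : ℝ) + 1) * τ) ω
            + (m - σ ^ 2 / 2) * (((i : ℝ) + 1) * τ))}).toReal / (Real.log x) ^ 2)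
      Filter.atTop (nhds (-1 / (2 * σ ^ 2 * τ * n))) := by
  set t : ℕ → ℝ := fun i ↦ ((i : ℝ) + 1) * τ
  have hT : 0 < τ * n := by positivity
  have ht : ∀ i ∈ Finset.range n, 0 < t i ∧ t i ≤ τ * n := fun i hi ↦ by
    refine ⟨by positivity, ?_⟩
    simp only [t]
    rw [mul_comm τ]
    gcongr
    exact_mod_cast Finset.mem_range.1 hi
  have hlast : t (n - 1) = τ * n := by
    simp only [t]
    rw [Nat.cast_sub hn]
    ring
  have hlast_mem : n - 1 ∈ Finset.range n := Finset.mem_range.2 (by omega)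
  have hs : (Finset.range n).Nonempty := ⟨_, hlast_mem⟩
  have key := tendsto_log_div_log_sq_of_le_of_le (by positivity)
    (eventually_gt_atTop 0 |>.and (tendsto_log_atTop.eventually_ge_atTop _) |>.mono
      fun x hx ↦ hW.le_measure_le_sum_exp (c := m - σ ^ 2 / 2) hlast_mem hσ hlast hT hx.1 hx.2)
    (eventually_gt_atTop 0 |>.and (tendsto_log_atTop.eventually_ge_atTop _) |>.mono
      fun x hx ↦ hW.measure_le_sum_exp_le (c := m - σ ^ 2 / 2) hs hσ ht hx.1 hx.2)
  convert key using 2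
  ring
end

section
/- For X_n = Σ_{i=1}^{n} exp(σ W_{t_i} + (m − σ²/2) t_i) with fixed n ∈ ℕ: lim_{ε→0} log P(X_n ≤ ε) / (log ε)² = −1/(2σ²τ). -/
open MeasureTheory ProbabilityTheory Real

/-!
Both bounds come down to the Gaussian left tail `log P(N(0,τ) ≤ a) ~ -a² / (2τ)` as `a → -∞`
(Chernoff from above, the density on `[a - 1, a]` from below).
From above: `X_n ≤ ε` forces the first term to be `≤ ε`, i.e. `W_τ ≤ (log ε - (m - σ²/2)τ) / σ`.
From below: the drift is nonpositive, so `X_n ≤ ε` as soon as the first Brownian increment is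
`≤ (log ε - log n) / σ` and the `n - 1` later ones are `≤ 0`; by independence of the increments
this event has probability `P(N(0,τ) ≤ (log ε - log n) / σ)` times a positive constant.
Both thresholds are `log ε / σ + O(1)`, whence the rate `-1 / (2σ²τ)`.
-/

open scoped NNReal Topology
open Set Filter

lemma tendsto_comp_inv_atBot {φ : ℝ → ℝ} (hφ : ContinuousAt φ 0) :
    Tendsto (fun x => φ x⁻¹) atBot (𝓝 (φ 0)) :=
  hφ.tendsto.comp tendsto_inv_atBot_zero

lemma tendsto_comp_affine_div_sq_atBot {f : ℝ → ℝ} {L : ℝ}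
    (hf : Tendsto (fun a => f a / a ^ 2) atBot (𝓝 L)) (k : ℝ) {σ : ℝ} (hσ : 0 < σ) :
    Tendsto (fun x => f ((x - k) / σ) / x ^ 2) atBot (𝓝 (L / σ ^ 2)) := by
  have haffine : Tendsto (fun x => (x - k) / σ) atBot atBot :=
    (tendsto_atBot_add_const_right _ (-k) tendsto_id).atBot_div_const hσ
  have hratio : Tendsto (fun x => ((1 - k * x⁻¹) / σ) ^ 2) atBot (𝓝 (1 / σ ^ 2)) := by
    have := tendsto_comp_inv_atBot (φ := fun y => ((1 - k * y) / σ) ^ 2) (by fun_prop)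
    simpa [div_pow] using this
  have hlim := (hf.comp haffine).mul hratio
  rw [mul_one_div] at hlim
  refine hlim.congr' ?_
  filter_upwards [eventually_lt_atBot 0, eventually_lt_atBot k] with x hx hxk
  have hx0 : x ≠ 0 := hx.ne
  have hy : x - k ≠ 0 := sub_ne_zero.2 hxk.ne
  simp only [Function.comp_apply]
  field_simp

lemma tendsto_const_div_sq_atBot (c : ℝ) : Tendsto (fun x : ℝ => c / x ^ 2) atBot (𝓝 0) := by
  convert tendsto_comp_inv_atBot (φ := fun y => c * y ^ 2) (by fun_prop) using 1
  · simp only [inv_pow, div_eq_mul_inv]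
  · simp

lemma gaussianReal_real_Iic_le_exp (v : ℝ≥0) {a : ℝ} (ha : a ≤ 0) :
    (gaussianReal 0 v).real (Iic a) ≤ exp (-a ^ 2 / (2 * v)) := by
  -- Chernoff bound at `t = a / v`
  have hchernoff := measure_le_le_exp_mul_mgf (X := id) (μ := gaussianReal 0 v) a
    (div_nonpos_of_nonpos_of_nonneg ha v.coe_nonneg) (integrable_exp_mul_gaussianReal _)
  rw [mgf_id_gaussianReal, ← exp_add] at hchernoff
  refine hchernoff.trans_eq (congrArg exp ?_)
  rcases eq_or_ne (v : ℝ) 0 with hv | hv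
  · simp [hv]
  · field_simp
    ring

lemma gaussianPDFReal_sub_one_le_real_Iic {v : ℝ≥0} (hv : v ≠ 0) {a : ℝ} (ha : a ≤ 0) :
    gaussianPDFReal 0 v (a - 1) ≤ (gaussianReal 0 v).real (Iic a) := by
  have hpdf_le : ∀ x ∈ Ioc (a - 1) a, gaussianPDFReal 0 v (a - 1) ≤ gaussianPDFReal 0 v x := by
    rintro x ⟨hx₁, hx₂⟩
    have hsq : (x - 0) ^ 2 ≤ (a - 1 - 0) ^ 2 := by nlinarith
    unfold gaussianPDFReal
    gcongr _ * exp (- ?_ / _)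
  have hint := integrable_gaussianPDFReal 0 v
  calc gaussianPDFReal 0 v (a - 1)
      = gaussianPDFReal 0 v (a - 1) * volume.real (Ioc (a - 1) a) := by simp
    _ ≤ ∫ x in Ioc (a - 1) a, gaussianPDFReal 0 v x :=
      setIntegral_ge_of_const_le_real measurableSet_Ioc measure_Ioc_lt_top.ne hpdf_le
        hint.integrableOn
    _ ≤ ∫ x in Iic a, gaussianPDFReal 0 v x :=
      setIntegral_mono_set hint.integrableOn
        (ae_of_all _ (gaussianPDFReal_nonneg 0 v)) (ae_of_all _ fun _ hx => hx.2)
    _ = (gaussianReal 0 v).real (Iic a) := by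
      rw [measureReal_def, gaussianReal_apply_eq_integral 0 hv,
        ENNReal.toReal_ofReal (setIntegral_nonneg measurableSet_Iic
          fun x _ => gaussianPDFReal_nonneg 0 v x)]

lemma gaussianReal_real_Iic_pos {v : ℝ≥0} (hv : v ≠ 0) (a : ℝ) :
    0 < (gaussianReal 0 v).real (Iic a) := by
  refine measureReal_nonneg.lt_of_ne' ((measureReal_ne_zero_iff).2 fun h => ?_)
  have := gaussianReal_absolutelyContinuous' 0 hv h
  simp at this

lemma log_gaussianPDFReal_zero (v : ℝ≥0) (x : ℝ) (hv : v ≠ 0) :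
    log (gaussianPDFReal 0 v x) = log (√(2 * π * v))⁻¹ - x ^ 2 / (2 * v) := by
  have : (√(2 * π * v))⁻¹ ≠ 0 := by positivity
  rw [gaussianPDFReal, log_mul this (exp_ne_zero _), log_exp, sub_zero, neg_div, sub_eq_add_neg]

lemma tendsto_log_gaussianReal_Iic_div_sq {v : ℝ≥0} (hv : v ≠ 0) :
    Tendsto (fun a => log ((gaussianReal 0 v).real (Iic a)) / a ^ 2) atBot
      (𝓝 (-1 / (2 * (v : ℝ)))) := by
  set K := log (√(2 * π * v))⁻¹
  have hlower : Tendsto (fun a => (K - (a - 1) ^ 2 / (2 * v)) / a ^ 2) atBot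
      (𝓝 (-1 / (2 * (v : ℝ)))) := by
    have h := tendsto_comp_inv_atBot (φ := fun y => K * y ^ 2 - (1 - y) ^ 2 / (2 * v))
      (by fun_prop)
    rw [neg_div]
    simp only [zero_pow two_ne_zero, mul_zero, sub_zero, one_pow, zero_sub] at h
    refine h.congr' ?_
    filter_upwards [eventually_lt_atBot 0] with a ha
    have : a ≠ 0 := ha.ne
    field_simp
  refine tendsto_of_tendsto_of_tendsto_of_le_of_le' hlower tendsto_const_nhds ?_ ?_
  all_goals filter_upwards [eventually_lt_atBot 0] with a ha
  · have hpdf := gaussianPDFReal_sub_one_le_real_Iic hv ha.le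
    rw [← log_gaussianPDFReal_zero v _ hv]
    gcongr
    exact gaussianPDFReal_pos 0 v _ hv
  · have hlog : log ((gaussianReal 0 v).real (Iic a)) ≤ -a ^ 2 / (2 * (v : ℝ)) :=
      (log_le_iff_le_exp (gaussianReal_real_Iic_pos hv a)).2
        (gaussianReal_real_Iic_le_exp v ha.le)
    calc log ((gaussianReal 0 v).real (Iic a)) / a ^ 2
        ≤ -a ^ 2 / (2 * (v : ℝ)) / a ^ 2 := by gcongr
      _ = -1 / (2 * (v : ℝ)) := by field_simp [ha.ne]

-- The paper's `X_n`, with `t_i = i τ`.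
noncomputable def gbmGridSum {Ω : Type*} (W : ℝ → Ω → ℝ) (σ m τ : ℝ) (n : ℕ) (ω : Ω) : ℝ :=
  ∑ i ∈ Finset.range n,
    exp (σ * W (((i : ℝ) + 1) * τ) ω + (m - σ ^ 2 / 2) * (((i : ℝ) + 1) * τ))

lemma le_of_forall_sub_le_cons {w : ℕ → ℝ} (h0 : w 0 = 0) {b : ℝ} {n : ℕ}
    (hinc : ∀ i : Fin (n + 1), w (i + 1) - w i ≤ (Fin.cons b fun _ => 0 : Fin (n + 1) → ℝ) i) :
    ∀ j ≤ n, w (j + 1) ≤ b := by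
  intro j hj
  induction j with
  | zero => simpa [h0] using hinc 0
  | succ j ih =>
    have hstep := hinc (Fin.succ ⟨j, by omega⟩)
    simp only [Fin.cons_succ, Fin.val_succ] at hstep
    linarith [ih (by omega)]

lemma gbmGridSum_le_of_forall_le {Ω : Type*} {W : ℝ → Ω → ℝ} {σ m τ b : ℝ} {n : ℕ}
    {ω : Ω} (hσ : 0 ≤ σ) (hτ : 0 ≤ τ) (hm : m ≤ σ ^ 2 / 2)
    (hW : ∀ i < n, W (((i : ℝ) + 1) * τ) ω ≤ b) :
    gbmGridSum W σ m τ n ω ≤ n * exp (σ * b) := by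
  calc gbmGridSum W σ m τ n ω ≤ ∑ _i ∈ Finset.range n, exp (σ * b) :=
        Finset.sum_le_sum fun i hi => exp_le_exp.2 ?_
    _ = n * exp (σ * b) := by simp
  have hdrift : (m - σ ^ 2 / 2) * (((i : ℝ) + 1) * τ) ≤ 0 :=
    mul_nonpos_of_nonpos_of_nonneg (by linarith) (by positivity)
  nlinarith [hW i (Finset.mem_range.1 hi)]

namespace IsStdBrownianMotion

variable {Ω : Type*} [MeasureSpace Ω] {W : ℝ → Ω → ℝ} {τ : ℝ}

lemma iIndepFun_sub_grid (hW : IsStdBrownianMotion W) (hτ : 0 ≤ τ) (n : ℕ) :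
    iIndepFun (fun (i : Fin n) ω => W ((i + 1 : ℕ) * τ) ω - W (i * τ) ω) ℙ :=
  hW.2.2.2.2 n (fun k => k * τ)
    (fun _ _ hkl => mul_le_mul_of_nonneg_right (Nat.cast_le.2 hkl) hτ) (by simp)

lemma map_sub_grid (hW : IsStdBrownianMotion W) (hτ : 0 ≤ τ) (i : ℕ) :
    Measure.map (fun ω => W ((i + 1 : ℕ) * τ) ω - W (i * τ) ω) ℙ =
      gaussianReal 0 τ.toNNReal := by
  rw [hW.2.2.2.1 _ _ (by positivity) (by gcongr; omega)]
  congr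
  push_cast
  ring

lemma measure_sub_grid_le (hW : IsStdBrownianMotion W) (hτ : 0 ≤ τ) (i : ℕ) (a : ℝ) :
    ℙ ((fun ω => W ((i + 1 : ℕ) * τ) ω - W (i * τ) ω) ⁻¹' Iic a) =
      gaussianReal 0 τ.toNNReal (Iic a) := by
  rw [← hW.map_sub_grid hτ i, Measure.map_apply _ measurableSet_Iic]
  exact (hW.2.2.1 _).sub (hW.2.2.1 _)

variable [IsFiniteMeasure (ℙ : Measure Ω)]

lemma measureReal_gbmGridSum_le_le (hW : IsStdBrownianMotion W) (hτ : 0 ≤ τ) {σ : ℝ}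
    (hσ : 0 < σ) (m : ℝ) {n : ℕ} (hn : n ≠ 0) {ε : ℝ} (hε : 0 < ε) :
    Measure.real ℙ {ω | gbmGridSum W σ m τ n ω ≤ ε} ≤
      (gaussianReal 0 τ.toNNReal).real (Iic ((log ε - (m - σ ^ 2 / 2) * τ) / σ)) := by
  rw [measureReal_def, measureReal_def, ← hW.measure_sub_grid_le hτ 0]
  refine ENNReal.toReal_mono (measure_ne_top _ _) (measure_mono fun ω hω => ?_)
  have hfirst : exp (σ * W τ ω + (m - σ ^ 2 / 2) * τ) ≤ ε := by
    refine le_trans ?_ hω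
    unfold gbmGridSum
    simpa using Finset.single_le_sum (f := fun i : ℕ =>
        exp (σ * W (((i : ℝ) + 1) * τ) ω + (m - σ ^ 2 / 2) * (((i : ℝ) + 1) * τ)))
      (fun i _ => (exp_pos _).le) (Finset.mem_range.2 (Nat.pos_of_ne_zero hn))
  rw [← le_log_iff_exp_le hε] at hfirst
  simp only [mem_preimage, mem_Iic, Nat.cast_zero, zero_add, Nat.cast_one, one_mul, zero_mul,
    hW.1, sub_zero]
  rw [le_div_iff₀ hσ]
  linarith

lemma measureReal_le_gbmGridSum_le (hW : IsStdBrownianMotion W) (hτ : 0 ≤ τ) {σ m : ℝ}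
    (hσ : 0 < σ) (hm : m ≤ σ ^ 2 / 2) (n : ℕ) {ε : ℝ} (hε : 0 < ε) :
    (gaussianReal 0 τ.toNNReal).real (Iic ((log ε - log (n + 1)) / σ)) *
        (gaussianReal 0 τ.toNNReal).real (Iic 0) ^ n ≤
      Measure.real ℙ {ω | gbmGridSum W σ m τ (n + 1) ω ≤ ε} := by
  set b := (log ε - log (n + 1)) / σ
  set c : Fin (n + 1) → ℝ := Fin.cons b fun _ => 0
  set E := ⋂ i : Fin (n + 1), (fun ω => W ((i + 1 : ℕ) * τ) ω - W (i * τ) ω) ⁻¹' Iic (c i)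
  have hE : ℙ E = gaussianReal 0 τ.toNNReal (Iic b) * gaussianReal 0 τ.toNNReal (Iic 0) ^ n := by
    rw [(hW.iIndepFun_sub_grid hτ (n + 1)).meas_iInter
      fun i => ⟨Iic (c i), measurableSet_Iic, rfl⟩]
    simp only [Fin.prod_univ_succ, hW.measure_sub_grid_le hτ]
    simp [c]
  have hsub : E ⊆ {ω | gbmGridSum W σ m τ (n + 1) ω ≤ ε} := by
    intro ω hω
    simp only [E, mem_iInter, mem_preimage, mem_Iic] at hω
    have hWle := le_of_forall_sub_le_cons (w := fun k : ℕ => W (k * τ) ω) (by simp [hW.1]) hω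
    have hσb : (n + 1 : ℝ) * exp (σ * b) = ε := by
      rw [mul_div_cancel₀ _ hσ.ne', exp_sub, exp_log hε, exp_log (by positivity)]
      field_simp
    calc gbmGridSum W σ m τ (n + 1) ω ≤ (n + 1 : ℕ) * exp (σ * b) :=
          gbmGridSum_le_of_forall_le hσ.le hτ hm fun i hi => by
            exact_mod_cast hWle i (by omega)
      _ = ε := by push_cast; exact hσb
  calc (gaussianReal 0 τ.toNNReal).real (Iic b) *
        (gaussianReal 0 τ.toNNReal).real (Iic 0) ^ n
      = Measure.real ℙ E := by
        simp only [measureReal_def, hE, ENNReal.toReal_mul, ENNReal.toReal_pow]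
    _ ≤ Measure.real ℙ {ω | gbmGridSum W σ m τ (n + 1) ω ≤ ε} := measureReal_mono hsub

end IsStdBrownianMotion

/-- Left-tail asymptotics of the finite sum
`X_n = ∑_{i=1}^{n} exp(σ W_{t_i} + (m-σ²/2)t_i)`:
`lim_{ε→0⁺} log P(X_n ≤ ε) / (log ε)² = -1/(2σ²τ)`. -/
theorem stmt19 {Ω : Type*} [MeasureSpace Ω] [IsProbabilityMeasure (ℙ : Measure Ω)]
    (W : ℝ → Ω → ℝ) (hW : IsStdBrownianMotion W)
    (σ τ m : ℝ) (hσ : 0 < σ) (hτ : 0 < τ) (hm : m < σ ^ 2 / 2)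
    (n : ℕ) (hn : 1 ≤ n) :
    Filter.Tendsto
      (fun ε : ℝ =>
        Real.log (ℙ {ω | ∑ i ∈ Finset.range n,
          Real.exp (σ * W (((i : ℝ) + 1) * τ) ω
            + (m - σ ^ 2 / 2) * (((i : ℝ) + 1) * τ)) ≤ ε}).toReal / (Real.log ε) ^ 2)
      (nhdsWithin 0 (Set.Ioi 0)) (nhds (-1 / (2 * σ ^ 2 * τ))) := by
  obtain ⟨n, rfl⟩ := Nat.exists_eq_add_of_le' hn
  set G := fun a => (gaussianReal 0 τ.toNNReal).real (Iic a)
  have hG : Tendsto (fun a => log (G a) / a ^ 2) atBot (𝓝 (-1 / (2 * τ))) := by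
    simpa [hτ.le] using tendsto_log_gaussianReal_Iic_div_sq (v := τ.toNNReal) (by simpa using hτ)
  have hlim : ∀ {f : ℝ → ℝ}, Tendsto (fun a => f a / a ^ 2) atBot (𝓝 (-1 / (2 * τ))) → ∀ k,
      Tendsto (fun ε => f ((log ε - k) / σ) / log ε ^ 2) (𝓝[>] 0)
        (𝓝 (-1 / (2 * σ ^ 2 * τ))) := by
    intro f hf k
    rw [show -1 / (2 * σ ^ 2 * τ) = -1 / (2 * τ) / σ ^ 2 by ring]
    exact (tendsto_comp_affine_div_sq_atBot hf k hσ).comp tendsto_log_nhdsGT_zero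
  have hlower := hlim (f := fun a => log (G a) + n * log (G 0))
    (by simpa only [add_div, add_zero] using hG.add (tendsto_const_div_sq_atBot _)) (log (n + 1))
  have hupper := hlim hG ((m - σ ^ 2 / 2) * τ)
  change Tendsto
    (fun ε => log (Measure.real ℙ {ω | gbmGridSum W σ m τ (n + 1) ω ≤ ε}) / log ε ^ 2) _ _
  have hGpos : ∀ a, 0 < G a := gaussianReal_real_Iic_pos (by simpa using hτ)
  have hGprod_pos : ∀ a, 0 < G a * G 0 ^ n := fun a => mul_pos (hGpos a) (pow_pos (hGpos 0) n)
  have hlow := fun {ε} (hε : 0 < ε) => hW.measureReal_le_gbmGridSum_le hτ.le hσ hm.le n hε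
  refine tendsto_of_tendsto_of_tendsto_of_le_of_le' hlower hupper ?_ ?_ <;>
    filter_upwards [self_mem_nhdsWithin] with ε (hε : 0 < ε) <;>
    refine div_le_div_of_nonneg_right ?_ (sq_nonneg _)
  · rw [← log_pow, ← log_mul (hGpos _).ne' (pow_pos (hGpos 0) n).ne']
    exact log_le_log (hGprod_pos _) (hlow hε)
  · exact log_le_log ((hGprod_pos _).trans_le (hlow hε))
      (hW.measureReal_gbmGridSum_le_le hτ.le hσ m n.succ_ne_zero hε)
end
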